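/- Let ψ ∈ ℂ^d ⊗ ℂ^d be a unit vector and P_ψ = |ψ⟩⟨ψ| the corresponding pure-state density matrix. Then P_ψ is separable if and only if τ(𝔄(P_ψ)) = 1. -/

import Mathlib

open scoped Matrix Kronecker BigOperators ComplexOrder
open MeasureTheory

/-- Trace norm of a complex square matrix: `tr √(AᴴA)` (the sum of singular values). -/
noncomputable def traceNorm {n : Type*} [Fintype n] [DecidableEq n] (A : Matrix n n ℂ) : ℝ :=
  (((Matrix.posSemidef_conjTranspose_mul_self A).1.eigenvectorUnitary.1 *
      Matrix.diagonal (fun i : n =>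
        ((Real.sqrt ((Matrix.posSemidef_conjTranspose_mul_self A).1.eigenvalues i) : ℝ) : ℂ)) *
      (star (Matrix.posSemidef_conjTranspose_mul_self A).1.eigenvectorUnitary : Matrix n n ℂ)).trace).re

/-- The greatest cross norm `‖·‖_γ` of an operator on `ℂ^{d₁} ⊗ ℂ^{d₂}`: the infimum of
`Σᵢ ‖uᵢ‖₁ ‖vᵢ‖₁` over all finite decompositions `T = Σᵢ uᵢ ⊗ vᵢ` into Kronecker products. -/
noncomputable def gcn {d₁ d₂ : ℕ} (T : Matrix (Fin d₁ × Fin d₂) (Fin d₁ × Fin d₂) ℂ) : ℝ :=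
  sInf { r : ℝ | ∃ (n : ℕ) (u : Fin n → Matrix (Fin d₁) (Fin d₁) ℂ)
      (v : Fin n → Matrix (Fin d₂) (Fin d₂) ℂ),
      T = ∑ i, u i ⊗ₖ v i ∧ r = ∑ i, traceNorm (u i) * traceNorm (v i) }

/-- A density matrix: positive semidefinite with trace one. -/
def IsDensityMatrix {n : Type*} [Fintype n] (ρ : Matrix n n ℂ) : Prop :=
  ρ.PosSemidef ∧ ρ.trace = 1

/-- Separability of a state on `ℂ^{d₁} ⊗ ℂ^{d₂}`: a finite convex-type combination
`ρ = Σᵢ ωᵢ ρᵢ⁽¹⁾ ⊗ ρᵢ⁽²⁾` of Kronecker products of density matrices, with `ωᵢ ≥ 0`. -/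
def IsSeparable' {d₁ d₂ : ℕ} (ρ : Matrix (Fin d₁ × Fin d₂) (Fin d₁ × Fin d₂) ℂ) : Prop :=
  ∃ (n : ℕ) (ω : Fin n → ℝ) (ρ₁ : Fin n → Matrix (Fin d₁) (Fin d₁) ℂ)
    (ρ₂ : Fin n → Matrix (Fin d₂) (Fin d₂) ℂ),
    (∀ i, 0 ≤ ω i) ∧ (∀ i, IsDensityMatrix (ρ₁ i)) ∧ (∀ i, IsDensityMatrix (ρ₂ i)) ∧
    ρ = ∑ i, (ω i : ℂ) • (ρ₁ i ⊗ₖ ρ₂ i)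

/-- The realignment map `𝔄`: `𝔄(ρ)_{(i,j),(k,l)} = ρ_{(i,k),(j,l)}`. -/
def realign {d : ℕ} (ρ : Matrix (Fin d × Fin d) (Fin d × Fin d) ℂ) :
    Matrix (Fin d × Fin d) (Fin d × Fin d) ℂ :=
  Matrix.of fun p q => ρ (p.1, q.1) (p.2, q.2)

/-- `τ(𝔄(ρ))`: the trace norm of the realignment of `ρ`. -/
noncomputable def tauRealign {d : ℕ} (ρ : Matrix (Fin d × Fin d) (Fin d × Fin d) ℂ) : ℝ :=
  traceNorm (realign ρ)

/-- The flip operator `𝔽 = Σ_{i,j} |i⊗j⟩⟨j⊗i|` on `ℂ^d ⊗ ℂ^d`. -/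
def flipOp (d : ℕ) : Matrix (Fin d × Fin d) (Fin d × Fin d) ℂ :=
  Matrix.of fun p q => if p.1 = q.2 ∧ p.2 = q.1 then 1 else 0

/-- The Werner state `ρ_f = (1/(d³−d))((d−f) I + (df−1) 𝔽)` on `ℂ^d ⊗ ℂ^d`. -/
noncomputable def wernerState (d : ℕ) (f : ℝ) : Matrix (Fin d × Fin d) (Fin d × Fin d) ℂ :=
  (((d : ℂ) ^ 3 - d)⁻¹) • (((d : ℂ) - (f : ℂ)) • (1 : Matrix (Fin d × Fin d) (Fin d × Fin d) ℂ)
    + ((d : ℂ) * (f : ℂ) - 1) • flipOp d)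

/-- The maximally entangled vector `|Ψ⁺⟩ = (1/√d) Σᵢ |i⊗i⟩` on `ℂ^d ⊗ ℂ^d`. -/
noncomputable def psiPlus (d : ℕ) : Fin d × Fin d → ℂ :=
  fun p => if p.1 = p.2 then ((1 / Real.sqrt d : ℝ) : ℂ) else 0

/-- The isotropic state `ρ_F = ((1−F)/(d²−1))(I − |Ψ⁺⟩⟨Ψ⁺|) + F |Ψ⁺⟩⟨Ψ⁺|` on `ℂ^d ⊗ ℂ^d`. -/
noncomputable def isotropicState (d : ℕ) (F : ℝ) : Matrix (Fin d × Fin d) (Fin d × Fin d) ℂ :=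
  (((1 - F : ℝ) : ℂ) / ((d : ℂ) ^ 2 - 1)) •
      ((1 : Matrix (Fin d × Fin d) (Fin d × Fin d) ℂ)
        - Matrix.vecMulVec (psiPlus d) (star (psiPlus d)))
    + ((F : ℝ) : ℂ) • Matrix.vecMulVec (psiPlus d) (star (psiPlus d))


open Matrix
set_option linter.unusedSectionVars false
set_option maxHeartbeats 1000000

variable {n m : Type*} [Fintype n] [DecidableEq n] [Fintype m] [DecidableEq m]

open scoped MatrixOrder

lemma traceNorm_def' (A : Matrix n n ℂ) : traceNorm A = (CFC.sqrt (Aᴴ * A)).trace.re := by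
  rw [CFC.sqrt_eq_real_sqrt _ (posSemidef_conjTranspose_mul_self A).nonneg, cfcₙ_eq_cfc,
    (posSemidef_conjTranspose_mul_self A).1.cfc_eq, IsHermitian.cfc, Unitary.conjStarAlgAut_apply]
  rfl

lemma posSemidef_iff_eq_transpose_mul_self {A : Matrix n n ℂ} :
    A.PosSemidef ↔ ∃ B : Matrix n n ℂ, A = Bᴴ * B := by
  constructor
  · intro hA
    obtain ⟨B, hB⟩ := CStarAlgebra.nonneg_iff_eq_star_mul_self.mp hA.nonneg
    exact ⟨B, by rw [hB, star_eq_conjTranspose]⟩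
  · rintro ⟨B, rfl⟩
    exact posSemidef_conjTranspose_mul_self B

lemma psd_vecMulVec (c : n → ℂ) : (vecMulVec c (star c)).PosSemidef := by
  rw [vecMulVec_eq (Fin 1), ← conjTranspose_replicateCol]
  exact posSemidef_self_mul_conjTranspose _

lemma kron_conjT (A : Matrix n n ℂ) (B : Matrix m m ℂ) : (A ⊗ₖ B)ᴴ = Aᴴ ⊗ₖ Bᴴ := by
  ext p q
  simp [conjTranspose_apply, kroneckerMap_apply, mul_comm]

lemma psd_kron {A : Matrix n n ℂ} {B : Matrix m m ℂ} (hA : A.PosSemidef) (hB : B.PosSemidef) :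
    (A ⊗ₖ B).PosSemidef := by
  obtain ⟨C, rfl⟩ := posSemidef_iff_eq_transpose_mul_self.mp hA
  obtain ⟨D, rfl⟩ := posSemidef_iff_eq_transpose_mul_self.mp hB
  rw [show (Cᴴ*C) ⊗ₖ (Dᴴ*D) = (Cᴴ ⊗ₖ Dᴴ) * (C ⊗ₖ D) from (mul_kronecker_mul _ _ _ _),
    ← kron_conjT]
  exact posSemidef_conjTranspose_mul_self _

lemma psd_conj {A : Matrix n n ℂ} (hA : A.PosSemidef) :
    (A.map (starRingEnd ℂ)).PosSemidef := by
  obtain ⟨C, rfl⟩ := posSemidef_iff_eq_transpose_mul_self.mp hA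
  rw [Matrix.map_mul]
  have : (Cᴴ).map (starRingEnd ℂ) = (C.map (starRingEnd ℂ))ᴴ := by
    ext i j; simp [conjTranspose_apply]
  rw [this]
  exact posSemidef_conjTranspose_mul_self _

lemma herm_trace_real {A : Matrix n n ℂ} (hA : A.IsHermitian) : A.trace = (A.trace.re : ℂ) := by
  have h := trace_conjTranspose A
  rw [hA.eq] at h
  have him : A.trace.im = 0 := by
    have := congrArg Complex.im h
    simp at this
    linarith
  exact (Complex.ext (by simp) (by simp [him])).symm

lemma psd_diag_nonneg {A : Matrix n n ℂ} (hA : A.PosSemidef) (i : n) : 0 ≤ A i i := by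
  exact hA.diag_nonneg

lemma psd_trace_nonneg {A : Matrix n n ℂ} (hA : A.PosSemidef) : 0 ≤ A.trace := by
  rw [Matrix.trace]
  exact Finset.sum_nonneg fun i _ => psd_diag_nonneg hA i

lemma traceNorm_nonneg (A : Matrix n n ℂ) : 0 ≤ traceNorm A := by
  rw [traceNorm_def']
  have h := psd_trace_nonneg (CFC.sqrt_nonneg (Aᴴ * A)).posSemidef
  exact (Complex.le_def.mp h).1

lemma trace_sqrt_eq (A : Matrix n n ℂ) :
    (CFC.sqrt (Aᴴ * A)).trace = ((traceNorm A : ℝ) : ℂ) := by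
  rw [traceNorm_def']
  exact herm_trace_real (CFC.sqrt_nonneg (Aᴴ * A)).posSemidef.1

lemma rank_one_of_traces {S : Matrix n n ℂ} (hS : S.PosSemidef)
    (h1 : S.trace = 1) (h2 : (S * S).trace = 1) :
    ∃ w : n → ℂ, S = vecMulVec w (star w) := by
  classical
  have hH := hS.1
  set U : Matrix n n ℂ := (hH.eigenvectorUnitary : Matrix n n ℂ) with hUdef
  set e := hH.eigenvalues with hedef
  set D : Matrix n n ℂ := diagonal (RCLike.ofReal ∘ e) with hDdef
  have hspec : S = U * D * star U := hH.spectral_theorem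
  have hmem := hH.eigenvectorUnitary.2
  have hUU : star U * U = 1 := (Unitary.mem_iff.mp hmem).1
  have htrD : S.trace = D.trace := by
    rw [hspec, trace_mul_comm, ← mul_assoc, hUU, one_mul]
  have htrD2 : (S * S).trace = (D * D).trace := by
    rw [hspec]
    have h3 : star U * (U * D * star U) = D * star U := by
      rw [← mul_assoc, ← mul_assoc, hUU, one_mul]
    have h4 : U * D * star U * (U * D * star U) = U * (D * D) * star U := by
      rw [mul_assoc (U * D), h3]
      noncomm_ring
    rw [h4, trace_mul_comm, ← mul_assoc, hUU, one_mul]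
  have hsum : ∑ i, e i = 1 := by
    have : D.trace = 1 := htrD ▸ h1
    rw [hDdef, trace_diagonal] at this
    simp only [Function.comp_apply, ← RCLike.ofReal_sum] at this
    exact RCLike.ofReal_injective (K := ℂ) (this.trans RCLike.ofReal_one.symm)
  have hsq : ∑ i, e i * e i = 1 := by
    have : (D * D).trace = 1 := htrD2 ▸ h2
    rw [hDdef, diagonal_mul_diagonal, trace_diagonal] at this
    simp only [Function.comp_apply, ← RCLike.ofReal_mul, ← RCLike.ofReal_sum] at this
    exact RCLike.ofReal_injective (K := ℂ) (this.trans RCLike.ofReal_one.symm)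
  have he0 : ∀ i, 0 ≤ e i := hS.eigenvalues_nonneg
  have hle1 : ∀ i, e i ≤ 1 := fun i => hsum ▸ Finset.single_le_sum (fun j _ => he0 j)
    (Finset.mem_univ i)
  have hzero : ∀ i ∈ Finset.univ, e i * (1 - e i) = 0 := by
    rw [← Finset.sum_eq_zero_iff_of_nonneg
      (fun i _ => mul_nonneg (he0 i) (by linarith [hle1 i]))]
    simp only [mul_sub, mul_one, Finset.sum_sub_distrib, hsum, hsq, sub_self]
  obtain ⟨i₀, hi₀⟩ : ∃ i₀, e i₀ ≠ 0 := by
    by_contra h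
    push_neg at h
    simp [h] at hsum
  have hei₀ : e i₀ = 1 := by
    rcases mul_eq_zero.mp (hzero i₀ (Finset.mem_univ _)) with h | h
    · exact absurd h hi₀
    · linarith [sub_eq_zero.mp h]
  have hrest : ∀ a, a ≠ i₀ → e a = 0 := by
    intro a ha
    have hsplit : e i₀ + ∑ j ∈ Finset.univ.erase i₀, e j = 1 := by
      rw [Finset.add_sum_erase _ _ (Finset.mem_univ i₀)]; exact hsum
    have hz : ∑ j ∈ Finset.univ.erase i₀, e j = 0 := by linarith [hei₀ ▸ hsplit]
    have := (Finset.sum_eq_zero_iff_of_nonneg (fun j _ => he0 j)).mp hz a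
      (Finset.mem_erase.mpr ⟨ha, Finset.mem_univ a⟩)
    exact this
  refine ⟨fun j => U j i₀, ?_⟩
  ext j k
  rw [hspec]
  have : (U * D * star U) j k = ∑ a, U j a * (e a : ℂ) * star (U k a) := by
    simp [Matrix.mul_apply, hDdef, diagonal_apply, mul_ite, mul_zero,
      Finset.sum_ite_eq', Matrix.star_eq_conjTranspose, conjTranspose_apply, Function.comp]
  rw [this, Finset.sum_eq_single i₀]
  · simp [vecMulVec_apply, hei₀]
  · intro a _ ha
    simp [hrest a ha]
  · intro h; exact absurd (Finset.mem_univ i₀) h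

lemma prod_of_gram {d : ℕ} (ψ : Fin d × Fin d → ℂ) (w : Fin d → ℂ)
    (hw : ∀ k l, (∑ i, (starRingEnd ℂ) (ψ (i,k)) * ψ (i,l)) = w k * (starRingEnd ℂ) (w l))
    (k₀ : Fin d) (hk₀ : w k₀ ≠ 0) :
    ∃ (u v : Fin d → ℂ), ∀ i k, ψ (i,k) = u i * v k := by
  have hkc : (starRingEnd ℂ) (w k₀) ≠ 0 := by
    simpa using hk₀
  refine ⟨fun i => ψ (i, k₀) / (starRingEnd ℂ) (w k₀), fun k => (starRingEnd ℂ) (w k), ?_⟩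
  intro i k
  set β : ℂ := (starRingEnd ℂ) (w k) / (starRingEnd ℂ) (w k₀) with hβ
  have hx : ∀ j, ψ (j,k) - β * ψ (j,k₀) = 0 := by
    have expand : ∀ j, (Complex.normSq (ψ (j,k) - β * ψ (j,k₀)) : ℂ)
        = (starRingEnd ℂ) (ψ (j,k)) * ψ (j,k)
          - β * ((starRingEnd ℂ) (ψ (j,k)) * ψ (j,k₀))
          - (starRingEnd ℂ) β * ((starRingEnd ℂ) (ψ (j,k₀)) * ψ (j,k))
          + (starRingEnd ℂ) β * β * ((starRingEnd ℂ) (ψ (j,k₀)) * ψ (j,k₀)) := by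
      intro j
      rw [Complex.normSq_eq_conj_mul_self]
      simp only [map_sub, _root_.map_mul, map_inv₀, Complex.conj_conj]
      ring
    have hsum : ∑ j, (Complex.normSq (ψ (j,k) - β * ψ (j,k₀)) : ℂ) = 0 := by
      simp only [expand, Finset.sum_add_distrib, Finset.sum_sub_distrib, ← Finset.mul_sum]
      rw [hw k k, hw k k₀, hw k₀ k, hw k₀ k₀, hβ]
      field_simp
      ring
    have hre : ∑ j, Complex.normSq (ψ (j,k) - β * ψ (j,k₀)) = 0 := by
      exact_mod_cast hsum
    intro j
    exact Complex.normSq_eq_zero.mp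
      ((Finset.sum_eq_zero_iff_of_nonneg (fun j _ => Complex.normSq_nonneg _)).mp hre j
        (Finset.mem_univ j))
  have h := sub_eq_zero.mp (hx i)
  rw [h, hβ]
  field_simp

lemma conjT_map (A : Matrix n m ℂ) :
    (A.map (starRingEnd ℂ))ᴴ = Aᴴ.map (starRingEnd ℂ) := by
  ext i j; simp [conjTranspose_apply]

lemma trace_map_conj (A : Matrix n n ℂ) :
    (A.map (starRingEnd ℂ)).trace = (starRingEnd ℂ) A.trace := by
  simp [Matrix.trace, Matrix.map_apply]

lemma tau_eq {d : ℕ} (ψ : Fin d × Fin d → ℂ) :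
    traceNorm (realign (vecMulVec ψ (star ψ)))
      = traceNorm (Matrix.of fun i k : Fin d => ψ (i,k)) ^ 2 := by
  classical
  set M : Matrix (Fin d) (Fin d) ℂ := Matrix.of (fun i k : Fin d => ψ (i,k)) with hM
  set Mc : Matrix (Fin d) (Fin d) ℂ := M.map (starRingEnd ℂ) with hMc
  have hX : realign (vecMulVec ψ (star ψ)) = M ⊗ₖ Mc := by
    ext p q
    simp [realign, vecMulVec_apply, kroneckerMap_apply, hMc, hM, Matrix.map_apply]
  set X : Matrix (Fin d × Fin d) (Fin d × Fin d) ℂ := M ⊗ₖ Mc with hXdef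
  have hN := Matrix.posSemidef_conjTranspose_mul_self M
  set N : Matrix (Fin d) (Fin d) ℂ := Mᴴ * M with hNdef
  set S : Matrix (Fin d) (Fin d) ℂ := CFC.sqrt N with hSdef
  have hSpsd : S.PosSemidef := (CFC.sqrt_nonneg N).posSemidef
  have hXX : Xᴴ * X = N ⊗ₖ (N.map (starRingEnd ℂ)) := by
    rw [hXdef, kron_conjT, ← mul_kronecker_mul, hMc, conjT_map, ← Matrix.map_mul, ← hNdef]
  have hsq : (S ⊗ₖ (S.map (starRingEnd ℂ))) ^ 2 = Xᴴ * X := by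
    rw [pow_two, ← mul_kronecker_mul, ← Matrix.map_mul, hXX]
    rw [show S * S = N from CFC.sqrt_mul_sqrt_self N hN.nonneg]
  have hsqrt : S ⊗ₖ (S.map (starRingEnd ℂ))
      = CFC.sqrt (Xᴴ * X) :=
    (CFC.sqrt_unique (by rw [← pow_two]; exact hsq) (psd_kron hSpsd (psd_conj hSpsd)).nonneg).symm
  have htr : S.trace = ((traceNorm M : ℝ) : ℂ) := trace_sqrt_eq M
  rw [show traceNorm (realign (vecMulVec ψ (star ψ))) = traceNorm X by rw [hX]]
  rw [traceNorm_def', ← hsqrt, trace_kronecker, trace_map_conj, htr]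
  simp [← Complex.ofReal_pow, pow_two]

lemma psd_real_smul {A : Matrix n n ℂ} (hA : A.PosSemidef) {t : ℝ} (ht : 0 ≤ t) :
    (((t : ℝ) : ℂ) • A).PosSemidef := by
  refine PosSemidef.of_dotProduct_mulVec_nonneg ?_ ?_
  · rw [IsHermitian, conjTranspose_smul, hA.1.eq]
    congr 1
    simp
  · intro x
    rw [smul_mulVec, dotProduct_smul, smul_eq_mul]
    have hz := hA.dotProduct_mulVec_nonneg x
    rw [Complex.le_def] at hz ⊢
    obtain ⟨h1, h2⟩ := hz
    constructor
    · simp only [Complex.mul_re, Complex.ofReal_re, Complex.ofReal_im, Complex.zero_re] at *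
      nlinarith
    · simp only [Complex.mul_im, Complex.ofReal_re, Complex.ofReal_im, Complex.zero_im] at *
      nlinarith

lemma psd_sum {k : ℕ} (f : Fin k → Matrix n n ℂ) (s : Finset (Fin k))
    (hf : ∀ i ∈ s, (f i).PosSemidef) : (∑ i ∈ s, f i).PosSemidef := by
  classical
  induction s using Finset.induction_on with
  | empty => simpa using Matrix.PosSemidef.zero
  | insert _ _ hns ih =>
    rw [Finset.sum_insert hns]
    exact Matrix.PosSemidef.add (hf _ (Finset.mem_insert_self _ _))
      (ih fun i hi => hf i (Finset.mem_insert_of_mem hi))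

lemma dominance {k : Type*} [Fintype k] [DecidableEq k] (ψ : k → ℂ)
    (hψ1 : star ψ ⬝ᵥ ψ = 1) {A B : Matrix k k ℂ} (hA : A.PosSemidef) (hB : B.PosSemidef)
    (hAB : A + B = vecMulVec ψ (star ψ)) :
    ∃ c : ℂ, A = c • vecMulVec ψ (star ψ) := by
  set P : Matrix k k ℂ := vecMulVec ψ (star ψ) with hP
  have key : ∀ φ : k → ℂ, star ψ ⬝ᵥ φ = 0 → A *ᵥ φ = 0 := by
    intro φ hφ
    have hPφ : P *ᵥ φ = 0 := by
      funext j
      have : (P *ᵥ φ) j = ψ j * (star ψ ⬝ᵥ φ) := by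
        simp [hP, mulVec, dotProduct, vecMulVec_apply, Finset.mul_sum, mul_assoc]
      rw [this, hφ, mul_zero]
      rfl
    have hsum : star φ ⬝ᵥ A *ᵥ φ + star φ ⬝ᵥ B *ᵥ φ = 0 := by
      rw [← dotProduct_add, ← add_mulVec, hAB, hPφ, dotProduct_zero]
    have hA0 := hA.dotProduct_mulVec_nonneg φ
    have hB0 := hB.dotProduct_mulVec_nonneg φ
    have hx : star φ ⬝ᵥ A *ᵥ φ = - (star φ ⬝ᵥ B *ᵥ φ) := eq_neg_of_add_eq_zero_left hsum
    have : star φ ⬝ᵥ A *ᵥ φ = 0 := le_antisymm (hx ▸ neg_nonpos.mpr hB0) hA0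
    exact (hA.dotProduct_mulVec_zero_iff φ).mp this
  set c : ℂ := star ψ ⬝ᵥ (A *ᵥ ψ) with hc
  set p : k → ℂ := A *ᵥ ψ - c • ψ with hpdef
  have hp : star ψ ⬝ᵥ p = 0 := by
    simp [hpdef, dotProduct_sub, dotProduct_smul, hψ1, hc, smul_eq_mul]
  have hAp : A *ᵥ p = 0 := key p hp
  have hrow : star p ᵥ* A = 0 := by
    have h1 : star (A *ᵥ p) = star p ᵥ* Aᴴ := star_mulVec A p
    rw [hAp, star_zero, hA.1.eq] at h1
    exact h1.symm
  have hdot : star p ⬝ᵥ (A *ᵥ ψ) = 0 := by rw [dotProduct_mulVec, hrow, zero_dotProduct]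
  have hpψ : star p ⬝ᵥ ψ = 0 := by
    have h2 : star p ⬝ᵥ ψ = star (star ψ ⬝ᵥ p) := by
      simp [dotProduct, Complex.star_def, map_sum, mul_comm]
    rw [h2, hp, star_zero]
  have hpp : star p ⬝ᵥ p = 0 := by
    have hexp : A *ᵥ ψ = c • ψ + p := by rw [hpdef, add_sub_cancel]
    have h3 := hdot
    rw [hexp, dotProduct_add, dotProduct_smul, hpψ, smul_eq_mul, mul_zero, zero_add] at h3
    exact h3
  have hp0 : p = 0 := dotProduct_star_self_eq_zero.mp hpp
  have hAψ : A *ᵥ ψ = c • ψ := by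
    have := hp0
    rw [hpdef, sub_eq_zero] at this
    exact this
  refine ⟨c, ?_⟩
  ext j l
  have hcol : A *ᵥ (Pi.single l 1) = (star ψ ⬝ᵥ Pi.single l 1) • (c • ψ) := by
    set φ : k → ℂ := Pi.single l 1 with hφdef
    set φ' : k → ℂ := φ - (star ψ ⬝ᵥ φ) • ψ with hφ'def
    have hφ'0 : star ψ ⬝ᵥ φ' = 0 := by
      simp [hφ'def, dotProduct_sub, dotProduct_smul, hψ1, smul_eq_mul]
    have h0 := key φ' hφ'0
    have h4 : A *ᵥ φ = A *ᵥ ((star ψ ⬝ᵥ φ) • ψ) + A *ᵥ φ' := by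
      rw [← mulVec_add]
      congr 1
      simp [hφ'def]
    rw [h4, h0, add_zero, mulVec_smul, hAψ]
  have hj := congrFun hcol j
  have hlhs : (A *ᵥ (Pi.single l 1)) j = A j l := by
    simp [mulVec, dotProduct, Pi.single_apply]
  have hdotsingle : star ψ ⬝ᵥ Pi.single l 1 = (starRingEnd ℂ) (ψ l) := by
    simp [dotProduct, Pi.single_apply]
  rw [hlhs, hdotsingle] at hj
  rw [hj]
  simp only [Pi.smul_apply, smul_eq_mul, hP, vecMulVec_apply, Matrix.smul_apply, Pi.star_apply, Complex.star_def]
  ring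

lemma traceNorm_zero : traceNorm (0 : Matrix n n ℂ) = 0 := by
  have h : (0 : Matrix n n ℂ)
      = CFC.sqrt ((0 : Matrix n n ℂ)ᴴ * 0) :=
    (CFC.sqrt_unique (by simp) Matrix.PosSemidef.zero.nonneg).symm
  rw [traceNorm_def', ← h]
  simp

lemma traceNorm_vecMulVec (a b : n → ℂ) :
    traceNorm (vecMulVec a b)
      = Real.sqrt (∑ i, Complex.normSq (a i)) * Real.sqrt (∑ i, Complex.normSq (b i)) := by
  classical
  set A := ∑ i, Complex.normSq (a i) with hAdef
  set B := ∑ i, Complex.normSq (b i) with hBdef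
  have hA0 : 0 ≤ A := Finset.sum_nonneg fun i _ => Complex.normSq_nonneg _
  have hB0 : 0 ≤ B := Finset.sum_nonneg fun i _ => Complex.normSq_nonneg _
  by_cases hB : B = 0
  · have hb : ∀ i, b i = 0 := fun i => Complex.normSq_eq_zero.mp
      ((Finset.sum_eq_zero_iff_of_nonneg (fun i _ => Complex.normSq_nonneg _)).mp hB i
        (Finset.mem_univ i))
    have h0 : vecMulVec a b = 0 := by ext i j; simp [vecMulVec_apply, hb]
    rw [h0, traceNorm_zero, hB, Real.sqrt_zero, mul_zero]
  · have hBpos : 0 < B := lt_of_le_of_ne hB0 (Ne.symm hB)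
    set G : Matrix n n ℂ := vecMulVec (star b) b with hGdef
    have hG : G.PosSemidef := by
      have h := psd_vecMulVec (star b)
      rwa [star_star] at h
    set t : ℝ := Real.sqrt A / Real.sqrt B with ht
    have ht0 : 0 ≤ t := div_nonneg (Real.sqrt_nonneg _) (Real.sqrt_nonneg _)
    have hS : (((t:ℝ):ℂ) • G).PosSemidef := psd_real_smul hG ht0
    have hsumb : ∑ m, star (b m) * b m = ((B:ℝ):ℂ) := by
      rw [hBdef]
      push_cast
      apply Finset.sum_congr rfl
      intro m _
      rw [Complex.star_def, ← Complex.normSq_eq_conj_mul_self]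
    have hGG : G * G = ((B:ℝ):ℂ) • G := by
      ext q q'
      have : (G * G) q q' = (star (b q) * b q') * ∑ m, star (b m) * b m := by
        rw [Finset.mul_sum]
        simp only [hGdef, mul_apply, vecMulVec_apply, Pi.star_apply]
        apply Finset.sum_congr rfl
        intros; ring
      rw [this, hsumb]
      simp [hGdef, vecMulVec_apply, smul_eq_mul]
      ring
    have hsuma : ∑ p, star (a p) * a p = ((A:ℝ):ℂ) := by
      rw [hAdef]
      push_cast
      apply Finset.sum_congr rfl
      intro m _
      rw [Complex.star_def, ← Complex.normSq_eq_conj_mul_self]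
    have hXX : (vecMulVec a b)ᴴ * vecMulVec a b = ((A:ℝ):ℂ) • G := by
      ext q q'
      have : ((vecMulVec a b)ᴴ * vecMulVec a b) q q'
          = (star (b q) * b q') * ∑ p, star (a p) * a p := by
        rw [Finset.mul_sum]
        simp only [mul_apply, conjTranspose_apply, vecMulVec_apply, Pi.star_apply,
          StarMul.star_mul]
        apply Finset.sum_congr rfl
        intros; ring
      rw [this, hsuma]
      simp [hGdef, vecMulVec_apply, smul_eq_mul]
      ring
    have htt' : t * t * B = A := by
      rw [ht, div_mul_div_comm, Real.mul_self_sqrt hA0, Real.mul_self_sqrt hB0]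
      exact div_mul_cancel₀ _ hB
    have htt : ((t:ℝ):ℂ) * ((t:ℝ):ℂ) * ((B:ℝ):ℂ) = ((A:ℝ):ℂ) := by
      rw [← Complex.ofReal_mul, ← Complex.ofReal_mul, htt']
    have hSS : (((t:ℝ):ℂ) • G) * (((t:ℝ):ℂ) • G) = (vecMulVec a b)ᴴ * vecMulVec a b := by
      rw [smul_mul_smul_comm, hGG, hXX, smul_smul, htt]
    have hsqrt : (((t:ℝ):ℂ) • G)
        = CFC.sqrt ((vecMulVec a b)ᴴ * vecMulVec a b) :=
      (CFC.sqrt_unique hSS hS.nonneg).symm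
    have hGtr : G.trace = ((B:ℝ):ℂ) := by
      rw [Matrix.trace]
      simpa [hGdef, vecMulVec_apply, Matrix.diag] using hsumb
    rw [traceNorm_def', ← hsqrt, trace_smul, hGtr, smul_eq_mul]
    have hsB : Real.sqrt B ≠ 0 := ne_of_gt (Real.sqrt_pos.mpr hBpos)
    have : t * B = Real.sqrt A * Real.sqrt B := by
      rw [ht, div_mul_eq_mul_div, mul_div_assoc, Real.div_sqrt]
    simp [← Complex.ofReal_mul, this]

section Assembly
variable {d : ℕ} (ψ : Fin d × Fin d → ℂ)

lemma norm_one_of (hψ : ∑ x, (starRingEnd ℂ) (ψ x) * ψ x = 1) :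
    ∑ x, Complex.normSq (ψ x) = 1 := by
  have h : ((∑ x, Complex.normSq (ψ x) : ℝ) : ℂ) = 1 := by
    push_cast
    rw [← hψ]
    apply Finset.sum_congr rfl
    intros
    rw [← Complex.normSq_eq_conj_mul_self]
  exact_mod_cast h

lemma prod_of_sep (hψ : ∑ x, (starRingEnd ℂ) (ψ x) * ψ x = 1)
    (hsep : IsSeparable' (vecMulVec ψ (star ψ))) :
    ∃ (u v : Fin d → ℂ), ∀ i k, ψ (i,k) = u i * v k := by
  classical
  obtain ⟨m, ω, ρ₁, ρ₂, hω, h1, h2, hsum⟩ := hsep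
  set T : Fin m → Matrix (Fin d × Fin d) (Fin d × Fin d) ℂ :=
    fun i => ((ω i : ℝ) : ℂ) • (ρ₁ i ⊗ₖ ρ₂ i) with hT
  have hTpsd : ∀ i, (T i).PosSemidef :=
    fun i => psd_real_smul (psd_kron (h1 i).1 (h2 i).1) (hω i)
  have hψne : ∃ x, ψ x ≠ 0 := by
    by_contra h
    push_neg at h
    simp [h] at hψ
  obtain ⟨x₀, hx₀⟩ := hψne
  have hPne : vecMulVec ψ (star ψ) ≠ 0 := by
    intro h
    have := congrFun (congrFun h x₀) x₀
    simp [vecMulVec_apply, Complex.star_def, mul_comm, Complex.mul_conj] at this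
    exact hx₀ (by simpa using this)
  obtain ⟨i₀, hi₀⟩ : ∃ i₀, T i₀ ≠ 0 := by
    by_contra h
    push_neg at h
    rw [show (∑ i, (ω i : ℂ) • (ρ₁ i ⊗ₖ ρ₂ i)) = ∑ i, T i from rfl] at hsum
    simp only [h] at hsum
    simp at hsum
    exact hx₀ (congrFun hsum x₀)
  have hsplit : T i₀ + ∑ j ∈ Finset.univ.erase i₀, T j = vecMulVec ψ (star ψ) := by
    rw [Finset.add_sum_erase _ _ (Finset.mem_univ i₀)]
    exact hsum.symm
  have hψdot : star ψ ⬝ᵥ ψ = 1 := by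
    rw [dotProduct]
    exact hψ
  obtain ⟨c, hc⟩ := dominance ψ hψdot (hTpsd i₀)
    (psd_sum T _ (fun j _ => hTpsd j)) hsplit
  have hcne : c ≠ 0 := by
    intro h
    rw [h, zero_smul] at hc
    exact hi₀ hc
  have hωne : (ω i₀ : ℂ) ≠ 0 := by
    intro h
    apply hi₀
    rw [hT]
    simp [h]
  have hstarne : (starRingEnd ℂ) (ψ x₀) ≠ 0 := by simpa using hx₀
  refine ⟨fun i => ρ₁ i₀ i x₀.1,
    fun k => (ω i₀ : ℂ) * ρ₂ i₀ k x₀.2 / (c * (starRingEnd ℂ) (ψ x₀)), ?_⟩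
  intro i k
  have hentry := congrFun (congrFun hc ((i,k) : Fin d × Fin d)) x₀
  simp only [hT, Matrix.smul_apply, kroneckerMap_apply, vecMulVec_apply, smul_eq_mul,
    Pi.star_apply, Complex.star_def] at hentry
  field_simp
  linear_combination -hentry

lemma sep_of_prod (hψ : ∑ x, (starRingEnd ℂ) (ψ x) * ψ x = 1)
    (hprod : ∃ (u v : Fin d → ℂ), ∀ i k, ψ (i,k) = u i * v k) :
    IsSeparable' (vecMulVec ψ (star ψ)) := by
  classical
  obtain ⟨u, v, huv⟩ := hprod
  set A := ∑ i, Complex.normSq (u i) with hAdef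
  set B := ∑ i, Complex.normSq (v i) with hBdef
  have hfact : A * B = 1 := by
    have h := norm_one_of ψ hψ
    rw [← h, Fintype.sum_prod_type]
    rw [hAdef, hBdef, Finset.sum_mul_sum]
    apply Finset.sum_congr rfl
    intro i _
    apply Finset.sum_congr rfl
    intro k _
    rw [huv i k, Complex.normSq_mul]
  have hA0 : 0 ≤ A := Finset.sum_nonneg fun i _ => Complex.normSq_nonneg _
  have hAne : A ≠ 0 := by
    intro h
    rw [h, zero_mul] at hfact
    exact one_ne_zero hfact.symm
  have hApos : 0 < A := lt_of_le_of_ne hA0 (Ne.symm hAne)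
  have htru : (vecMulVec u (star u)).trace = ((A:ℝ):ℂ) := by
    rw [Matrix.trace]
    simp only [Matrix.diag, vecMulVec_apply, Pi.star_apply, Complex.star_def]
    rw [hAdef]
    push_cast
    apply Finset.sum_congr rfl
    intros
    rw [Complex.mul_conj]
  have htrv : (vecMulVec v (star v)).trace = ((B:ℝ):ℂ) := by
    rw [Matrix.trace]
    simp only [Matrix.diag, vecMulVec_apply, Pi.star_apply, Complex.star_def]
    rw [hBdef]
    push_cast
    apply Finset.sum_congr rfl
    intros
    rw [Complex.mul_conj]
  refine ⟨1, fun _ => 1, fun _ => ((A⁻¹ : ℝ) : ℂ) • vecMulVec u (star u),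
    fun _ => ((A : ℝ) : ℂ) • vecMulVec v (star v), fun _ => zero_le_one, ?_, ?_, ?_⟩
  · intro i
    refine ⟨psd_real_smul (psd_vecMulVec u) (inv_nonneg.mpr hA0), ?_⟩
    rw [trace_smul, htru, smul_eq_mul, ← Complex.ofReal_mul, inv_mul_cancel₀ hAne]
    norm_num
  · intro i
    refine ⟨psd_real_smul (psd_vecMulVec v) hA0, ?_⟩
    rw [trace_smul, htrv, smul_eq_mul, ← Complex.ofReal_mul, hfact]
    norm_num
  · rw [Fin.sum_univ_one]
    ext p q
    simp only [Matrix.smul_apply, kroneckerMap_apply, vecMulVec_apply, Pi.star_apply,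
      Complex.star_def, smul_eq_mul, Complex.ofReal_one, one_mul]
    rw [huv p.1 p.2, huv q.1 q.2]
    have : ((A⁻¹ : ℝ) : ℂ) * ((A : ℝ) : ℂ) = 1 := by
      rw [← Complex.ofReal_mul, inv_mul_cancel₀ hAne]
      norm_num
    field_simp
    simp only [map_mul]
    push_cast at this ⊢
    linear_combination (-(u p.1 * v p.2 * (starRingEnd ℂ) (u q.1) * (starRingEnd ℂ) (v q.2))) * this
end Assembly

section Assembly2
variable {d : ℕ} (ψ : Fin d × Fin d → ℂ)

lemma prod_norm_fact (hψ : ∑ x, (starRingEnd ℂ) (ψ x) * ψ x = 1) {u v : Fin d → ℂ}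
    (huv : ∀ i k, ψ (i,k) = u i * v k) :
    (∑ i, Complex.normSq (u i)) * (∑ i, Complex.normSq (v i)) = 1 := by
  have h := norm_one_of ψ hψ
  rw [← h, Fintype.sum_prod_type, Finset.sum_mul_sum]
  apply Finset.sum_congr rfl
  intro i _
  apply Finset.sum_congr rfl
  intro k _
  rw [huv i k, Complex.normSq_mul]

lemma tau_one_of_prod (hψ : ∑ x, (starRingEnd ℂ) (ψ x) * ψ x = 1)
    (hprod : ∃ (u v : Fin d → ℂ), ∀ i k, ψ (i,k) = u i * v k) :
    traceNorm (realign (vecMulVec ψ (star ψ))) = 1 := by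
  obtain ⟨u, v, huv⟩ := hprod
  have hM : (Matrix.of fun i k : Fin d => ψ (i,k)) = vecMulVec u v := by
    ext i k; simp [vecMulVec_apply, huv]
  rw [tau_eq, hM, traceNorm_vecMulVec, mul_pow,
    Real.sq_sqrt (Finset.sum_nonneg fun i _ => Complex.normSq_nonneg _),
    Real.sq_sqrt (Finset.sum_nonneg fun i _ => Complex.normSq_nonneg _),
    prod_norm_fact ψ hψ huv]

lemma prod_of_tau_one (hψ : ∑ x, (starRingEnd ℂ) (ψ x) * ψ x = 1)
    (htau : traceNorm (realign (vecMulVec ψ (star ψ))) = 1) :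
    ∃ (u v : Fin d → ℂ), ∀ i k, ψ (i,k) = u i * v k := by
  classical
  set M : Matrix (Fin d) (Fin d) ℂ := Matrix.of (fun i k : Fin d => ψ (i,k)) with hM
  have htau2 : traceNorm M ^ 2 = 1 := by rw [← tau_eq]; exact htau
  have hr0 : 0 ≤ traceNorm M := traceNorm_nonneg M
  have hr1 : traceNorm M = 1 := by nlinarith [htau2]
  have hN := Matrix.posSemidef_conjTranspose_mul_self M
  set S := CFC.sqrt (Mᴴ * M) with hS
  have hSpsd : S.PosSemidef := (CFC.sqrt_nonneg (Mᴴ * M)).posSemidef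
  have htrS : S.trace = 1 := by
    rw [hS, trace_sqrt_eq M, hr1]
    norm_num
  have hSS : S * S = Mᴴ * M := CFC.sqrt_mul_sqrt_self _ hN.nonneg
  have htrS2 : (S * S).trace = 1 := by
    rw [hSS, Matrix.trace]
    simp only [Matrix.diag, mul_apply, conjTranspose_apply, Complex.star_def, hM,
      Matrix.of_apply]
    rw [← hψ, Fintype.sum_prod_type, Finset.sum_comm]
  obtain ⟨w, hw⟩ := rank_one_of_traces hSpsd htrS htrS2
  have hwsum : ∑ j, w j * (starRingEnd ℂ) (w j) = 1 := by
    rw [← htrS, hw, Matrix.trace]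
    simp [Matrix.diag, vecMulVec_apply, Complex.star_def]
  obtain ⟨k₀, hk₀⟩ : ∃ k₀, w k₀ ≠ 0 := by
    by_contra h
    push_neg at h
    simp [h] at hwsum
  apply prod_of_gram ψ w ?_ k₀ hk₀
  intro k l
  have h1 : (Mᴴ * M) k l = ∑ i, (starRingEnd ℂ) (ψ (i,k)) * ψ (i,l) := by
    simp [mul_apply, conjTranspose_apply, Complex.star_def, hM]
  have h3 : ∑ m, (starRingEnd ℂ) (w m) * w m = 1 := by
    rw [← hwsum]
    apply Finset.sum_congr rfl
    intros
    ring
  have h2 : (S * S) k l = (w k * (starRingEnd ℂ) (w l)) * ∑ m, (starRingEnd ℂ) (w m) * w m := by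
    rw [hw, mul_apply, Finset.mul_sum]
    apply Finset.sum_congr rfl
    intros
    simp only [vecMulVec_apply, Pi.star_apply, Complex.star_def]
    ring
  rw [← h1, ← hSS, h2, h3, mul_one]

end Assembly2


/-- A pure state `P_ψ = |ψ⟩⟨ψ|` on `ℂ^d ⊗ ℂ^d` is separable iff `τ(𝔄(P_ψ)) = 1`. -/
theorem pure_separable_iff_tauRealign_eq_one (d : ℕ) (ψ : Fin d × Fin d → ℂ)
    (hψ : ∑ x, (starRingEnd ℂ) (ψ x) * ψ x = 1) :
    IsSeparable' (Matrix.vecMulVec ψ (star ψ)) ↔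
      tauRealign (Matrix.vecMulVec ψ (star ψ)) = 1 := by
  constructor
  · intro hsep
    exact tau_one_of_prod ψ hψ (prod_of_sep ψ hψ hsep)
  · intro htau
    exact sep_of_prod ψ hψ (prod_of_tau_one ψ hψ htau)
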